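/- Suppose ⟨A, G'(A)⟩_τ = −½ ∑_j Tr([W_j,A]*[W_j,A]ρ_τ) with ρ_τ > 0, G'(1) = 0, G' is a *-map, and the only bounded operators commuting with all W_j and all W_j* are scalar multiples of the identity. Then every bounded operator A with G'(A) = 0 is a scalar multiple of the identity, i.e. Null(G') ∩ B(H) = ℂ·1. -/

import Mathlib

open scoped InnerProductSpace

/-- Trace along a Hilbert basis. -/
noncomputable def traceAlong {H : Type*} [NormedAddCommGroup H]
    [InnerProductSpace ℂ H] [CompleteSpace H]
    (e : HilbertBasis ℕ ℂ H) (T : H →L[ℂ] H) : ℂ :=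
  ∑' i, ⟪e i, T (e i)⟫_ℂ

/-!
If `G' A = 0`, the quadratic-form identity says that the nonnegative numbers
`Tr([W_j, A]* [W_j, A] ρ) = ∑ᵢ ‖[W_j, A] ρ^{1/2} eᵢ‖²` (cyclicity of the trace) sum to zero,
so
`[W_j, A] ρ^{1/2} = 0`; as `ρ^{1/2}` is self-adjoint and injective its range is dense, whence
`[W_j, A] = 0`. Since `G'` is a `*`-map, `A*` lies in the kernel as well, giving `[W_j*, A] = 0`,
and irreducibility forces `A ∈ ℂ·1`.
-/

theorem summable_mul_of_summable_norm_sq {ι R : Type*} [NormedRing R] [CompleteSpace R]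
    {f g : ι → R} (hf : Summable fun i => ‖f i‖ ^ 2) (hg : Summable fun i => ‖g i‖ ^ 2) :
    Summable fun i => f i * g i := by
  refine Summable.of_norm_bounded ((hf.add hg).mul_left (1 / 2)) fun i => ?_
  linarith [two_mul_le_add_sq ‖f i‖ ‖g i‖, norm_mul_le (f i) (g i)]

theorem ContinuousLinearMap.summable_norm_apply_sq {ι 𝕜 E F : Type*}
    [NontriviallyNormedField 𝕜] [SeminormedAddCommGroup E] [SeminormedAddCommGroup F]
    [NormedSpace 𝕜 E] [NormedSpace 𝕜 F]
    (C : E →L[𝕜] F) {f : ι → E} (hf : Summable fun i => ‖f i‖ ^ 2) :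
    Summable fun i => ‖C (f i)‖ ^ 2 := by
  refine Summable.of_nonneg_of_le (fun i => sq_nonneg _) (fun i => ?_) (hf.mul_left (‖C‖ ^ 2))
  rw [← mul_pow]
  exact pow_le_pow_left₀ (norm_nonneg _) (C.le_opNorm _) 2

namespace HilbertBasis

variable {ι 𝕜 E : Type*} [RCLike 𝕜] [NormedAddCommGroup E] [InnerProductSpace 𝕜 E]

theorem hasSum_norm_inner_sq (b : HilbertBasis ι 𝕜 E) (x : E) :
    HasSum (fun i => ‖⟪b i, x⟫_𝕜‖ ^ 2) (‖x‖ ^ 2) := by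
  have h := lp.hasSum_norm (p := 2) (by norm_num) (b.repr x)
  simpa only [ENNReal.toReal_ofNat, Real.rpow_two, LinearIsometryEquiv.norm_map,
    b.repr_apply_apply] using h

theorem summable_norm_inner_sq_prod (b : HilbertBasis ι 𝕜 E) {κ : Type*} {v : κ → E}
    (hv : Summable fun k => ‖v k‖ ^ 2) :
    Summable fun p : κ × ι => ‖⟪b p.2, v p.1⟫_𝕜‖ ^ 2 := by
  rw [summable_prod_of_nonneg fun p => sq_nonneg ‖⟪b p.2, v p.1⟫_𝕜‖]
  exact ⟨fun k => (b.hasSum_norm_inner_sq (v k)).summable,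
    hv.congr fun k => (b.hasSum_norm_inner_sq (v k)).tsum_eq.symm⟩

theorem eq_zero_of_tsum_norm_apply_sq_eq_zero (b : HilbertBasis ι 𝕜 E) {R B : E →L[𝕜] E}
    (hR : DenseRange R) (hRb : Summable fun i => ‖R (b i)‖ ^ 2)
    (h : ∑' i, ‖B (R (b i))‖ ^ 2 = 0) : B = 0 := by
  have hsum := (B.summable_norm_apply_sq hRb).hasSum
  rw [h, hasSum_zero_iff_of_nonneg fun _ => sq_nonneg _] at hsum
  have hspan := Submodule.dense_iff_topologicalClosure_eq_top.mpr b.dense_span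
  have hBR : B * R = 0 := ContinuousLinearMap.ext_on hspan <| by
    rintro _ ⟨i, rfl⟩
    simpa using congrFun hsum i
  ext x
  exact congrFun (hR.equalizer B.continuous continuous_zero (congrArg DFunLike.coe hBR)) x

variable [CompleteSpace E]

/-- Cyclicity of the trace for operators that are Hilbert–Schmidt along `b`. -/
theorem tsum_inner_apply_apply_comm (b : HilbertBasis ι 𝕜 E) {S T : E →L[𝕜] E}
    (hS : Summable fun i => ‖S (b i)‖ ^ 2) (hT : Summable fun i => ‖T (b i)‖ ^ 2) :
    ∑' i, ⟪b i, S (T (b i))⟫_𝕜 = ∑' i, ⟪b i, T (S (b i))⟫_𝕜 := by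
  let a : ι → ι → 𝕜 := fun i k => ⟪b i, S (b k)⟫_𝕜 * ⟪b k, T (b i)⟫_𝕜
  have hrow : ∀ i, HasSum (a i) ⟪b i, S (T (b i))⟫_𝕜 := fun i => by
    simpa only [ContinuousLinearMap.adjoint_inner_left] using
      b.hasSum_inner_mul_inner (S.adjoint (b i)) (T (b i))
  have hcol : ∀ k, HasSum (fun i => a i k) ⟪b k, T (S (b k))⟫_𝕜 := fun k => by
    simp only [a, mul_comm ⟪b _, S (b k)⟫_𝕜]
    simpa only [ContinuousLinearMap.adjoint_inner_left, mul_comm] using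
      b.hasSum_inner_mul_inner (T.adjoint (b k)) (S (b k))
  have hSb : Summable fun p : ι × ι => ‖⟪b p.1, S (b p.2)⟫_𝕜‖ ^ 2 :=
    (Equiv.prodComm ι ι).summable_iff.mpr (b.summable_norm_inner_sq_prod hS)
  have ha := summable_mul_of_summable_norm_sq hSb (b.summable_norm_inner_sq_prod hT)
  calc ∑' i, ⟪b i, S (T (b i))⟫_𝕜 = ∑' i, ∑' k, a i k :=
        tsum_congr fun i => (hrow i).tsum_eq.symm
    _ = ∑' k, ∑' i, a i k := (Summable.tsum_comm (f := a) ha).symm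
    _ = ∑' k, ⟪b k, T (S (b k))⟫_𝕜 := tsum_congr fun k => (hcol k).tsum_eq

end HilbertBasis

theorem IsSelfAdjoint.denseRange_of_injective {𝕜 E : Type*} [RCLike 𝕜] [NormedAddCommGroup E]
    [InnerProductSpace 𝕜 E] [CompleteSpace E] {T : E →L[𝕜] E} (hT : IsSelfAdjoint T)
    (hinj : Function.Injective T) : DenseRange T := by
  have : T.rangeᗮ = ⊥ := by
    rw [T.orthogonal_range, ContinuousLinearMap.isSelfAdjoint_iff'.mp hT]
    exact LinearMap.ker_eq_bot.mpr hinj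
  rw [← Submodule.topologicalClosure_eq_top_iff,
    ← Submodule.dense_iff_topologicalClosure_eq_top] at this
  simpa [DenseRange, LinearMap.coe_range] using this

section traceAlong

variable {H : Type*} [NormedAddCommGroup H] [InnerProductSpace ℂ H] [CompleteSpace H]

@[simp]
theorem traceAlong_zero (e : HilbertBasis ℕ ℂ H) : traceAlong e 0 = 0 := by
  simp [traceAlong]

theorem traceAlong_star_mul_self_mul_sq (e : HilbertBasis ℕ ℂ H) {R : H →L[ℂ] H}
    (hR : IsSelfAdjoint R) (hRe : Summable fun i => ‖R (e i)‖ ^ 2) (B : H →L[ℂ] H) :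
    traceAlong e (star B * B * (R * R)) = ((∑' i, ‖B (R (e i))‖ ^ 2 : ℝ) : ℂ) := by
  have hS : Summable fun i => ‖(star B * B * R) (e i)‖ ^ 2 :=
    (star B * B).summable_norm_apply_sq hRe
  change ∑' i, ⟪e i, (star B * B * R) (R (e i))⟫_ℂ = _
  rw [e.tsum_inner_apply_apply_comm hS hRe, Complex.ofReal_tsum]
  refine tsum_congr fun i => ?_
  rw [← hR.adjoint_eq, R.adjoint_inner_right, hR.adjoint_eq]
  change ⟪R (e i), B.adjoint (B (R (e i)))⟫_ℂ = _
  rw [B.adjoint_inner_right, inner_self_eq_norm_sq_to_K]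
  norm_cast

theorem eq_zero_of_hasSum_traceAlong_eq_zero (e : HilbertBasis ℕ ℂ H) {R : H →L[ℂ] H}
    (hR : IsSelfAdjoint R) (hinj : Function.Injective R) (hRe : Summable fun i => ‖R (e i)‖ ^ 2)
    {κ : Type*} {B : κ → H →L[ℂ] H}
    (h : HasSum (fun j => traceAlong e (star (B j) * B j * (R * R))) 0) (j : κ) : B j = 0 := by
  simp only [traceAlong_star_mul_self_mul_sq e hR hRe] at h
  rw [← Complex.ofReal_zero, Complex.hasSum_ofReal,
    hasSum_zero_iff_of_nonneg fun _ => tsum_nonneg fun _ => sq_nonneg _] at h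
  exact e.eq_zero_of_tsum_norm_apply_sq_eq_zero (hR.denseRange_of_injective hinj) hRe (congrFun h j)

end traceAlong

theorem stmt18_general
    {H : Type*} [NormedAddCommGroup H] [InnerProductSpace ℂ H] [CompleteSpace H]
    (e : HilbertBasis ℕ ℂ H) (ρhalf ρ : H →L[ℂ] H)
    (hρ : ρ = ρhalf * ρhalf)
    (hpos : ρhalf.IsPositive) (hinj : Function.Injective ρhalf)
    (htrρ : Summable fun i => (⟪e i, ρ (e i)⟫_ℂ).re)
    (W : ℕ → H →L[ℂ] H)
    (G' : (H →L[ℂ] H) → (H →L[ℂ] H))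
    (hstar : ∀ A : H →L[ℂ] H, G' (star A) = star (G' A))
    (hquad : ∀ A : H →L[ℂ] H,
      HasSum
        (fun j => traceAlong e (star (W j * A - A * W j) * (W j * A - A * W j) * ρ))
        (-2 * traceAlong e (star A * G' A * ρ)))
    (hU : ∀ A : H →L[ℂ] H,
      (∀ j, W j * A = A * W j ∧ star (W j) * A = A * star (W j)) →
        ∃ c : ℂ, A = c • (1 : H →L[ℂ] H)) :
    ∀ A : H →L[ℂ] H, G' A = 0 → ∃ c : ℂ, A = c • (1 : H →L[ℂ] H) := by
  have hsa : IsSelfAdjoint ρhalf := hpos.isSelfAdjoint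
  have hρe : Summable fun i => ‖ρhalf (e i)‖ ^ 2 := htrρ.congr fun i => by
    rw [ρhalf.apply_norm_sq_eq_inner_adjoint_right, hsa.adjoint_eq, hρ]
    rfl
  have hcomm : ∀ A, G' A = 0 → ∀ j, W j * A = A * W j := fun A hA j =>
    sub_eq_zero.mp <| eq_zero_of_hasSum_traceAlong_eq_zero e hsa hinj hρe
      (by simpa only [hA, mul_zero, zero_mul, traceAlong_zero, ← hρ] using hquad A) j
  intro A hA
  refine hU A fun j => ⟨hcomm A hA j, ?_⟩
  have := congrArg star (hcomm (star A) (by rw [hstar, hA, star_zero]) j)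
  simpa only [star_mul, star_star, eq_comm] using this

/-- Suppose the Lindblad generator `G'` (a `*`-map with `G'(1) = 0`)
satisfies the quadratic-form identity
`⟨A, G'(A)⟩_τ = −½ ∑_j Tr([W_j,A]* [W_j,A] ρ)` (as a convergent sum) for the strictly
positive trace-class `ρ = ρhalf²`, and assume the irreducibility condition (U): any
bounded operator commuting with all `W_j` and all `W_j*` is a scalar multiple of the
identity.  Then every bounded `A` with `G'(A) = 0` is a scalar multiple of `1`, i.e.
`Null(G') ∩ B(H) = ℂ·1`. -/
theorem stmt18
    {H : Type*} [NormedAddCommGroup H] [InnerProductSpace ℂ H] [CompleteSpace H]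
    (e : HilbertBasis ℕ ℂ H) (ρhalf ρ : H →L[ℂ] H)
    (hρ : ρ = ρhalf * ρhalf)
    (hpos : ρhalf.IsPositive) (hinj : Function.Injective ρhalf)
    (htrρ : Summable fun i => (⟪e i, ρ (e i)⟫_ℂ).re)
    (W : ℕ → H →L[ℂ] H)
    (G' : (H →L[ℂ] H) → (H →L[ℂ] H))
    (hstar : ∀ A : H →L[ℂ] H, G' (star A) = star (G' A))
    (hone : G' 1 = 0)
    (hquad : ∀ A : H →L[ℂ] H,
      HasSum
        (fun j => traceAlong e (star (W j * A - A * W j) * (W j * A - A * W j) * ρ))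
        (-2 * traceAlong e (star A * G' A * ρ)))
    (hU : ∀ A : H →L[ℂ] H,
      (∀ j, W j * A = A * W j ∧ star (W j) * A = A * star (W j)) →
        ∃ c : ℂ, A = c • (1 : H →L[ℂ] H)) :
    ∀ A : H →L[ℂ] H, G' A = 0 → ∃ c : ℂ, A = c • (1 : H →L[ℂ] H) :=
  stmt18_general e ρhalf ρ hρ hpos hinj htrρ W G' hstar hquad hU
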